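/- Let h(p) = -Σ_k p_k log p_k denote Shannon entropy on probability vectors over {1,...,K}. For the temperature-scaled softmax π_τ(s), the entropy h(π_τ(s)) is nondecreasing in τ for τ > 0 (for fixed s not constant). -/

import Mathlib

/-- Gibbs' inequality: cross entropy is at least entropy. -/
lemma gibbs_aux {K : ℕ} (P Q : Fin K → ℝ) (hP : ∀ k, 0 < P k) (hQ : ∀ k, 0 < Q k)
    (hPs : ∑ k, P k = 1) (hQs : ∑ k, Q k = 1) :
    ∑ k, P k * Real.log (Q k) ≤ ∑ k, P k * Real.log (P k) := by
  have key : ∀ k : Fin K, P k * Real.log (Q k) - P k * Real.log (P k) ≤ Q k - P k := by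
    intro k
    have hlog := Real.log_le_sub_one_of_pos (div_pos (hQ k) (hP k))
    have hdiv : Real.log (Q k / P k) = Real.log (Q k) - Real.log (P k) :=
      Real.log_div (hQ k).ne' (hP k).ne'
    have hmul := mul_le_mul_of_nonneg_left hlog (hP k).le
    have heq : P k * (Q k / P k - 1) = Q k - P k := by
      field_simp [(hP k).ne']
    rw [hdiv] at hmul
    nlinarith [hmul]
  have hsum := Finset.sum_le_sum (fun k (_ : k ∈ Finset.univ) => key k)
  rw [Finset.sum_sub_distrib, Finset.sum_sub_distrib, hPs, hQs] at hsum
  linarith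

/-- Shannon entropy of the temperature-scaled softmax is nondecreasing in the
temperature `τ > 0`, for a fixed non-constant score vector `s`. -/
theorem softmax_entropy_monotone_in_temperature {K : ℕ} (s : Fin K → ℝ)
    (hs : ∃ i j, s i ≠ s j)
    (p : ℝ → Fin K → ℝ)
    (hp : ∀ τ k, p τ k = Real.exp (s k / τ) / ∑ j, Real.exp (s j / τ)) :
    ∀ τ₁ τ₂ : ℝ, 0 < τ₁ → τ₁ ≤ τ₂ →
      (-∑ k, p τ₁ k * Real.log (p τ₁ k)) ≤ (-∑ k, p τ₂ k * Real.log (p τ₂ k)) := by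
  obtain ⟨i, -, -⟩ := hs
  haveI : Nonempty (Fin K) := ⟨i⟩
  intro τ₁ τ₂ hτ₁ h12
  rcases eq_or_lt_of_le h12 with rfl | hlt
  · exact le_refl _
  have hτ₂ : 0 < τ₂ := hτ₁.trans hlt
  set Z : ℝ → ℝ := fun τ => ∑ j, Real.exp (s j / τ) with hZdef
  have hZpos : ∀ τ, 0 < Z τ :=
    fun τ => Finset.sum_pos (fun j _ => Real.exp_pos _) Finset.univ_nonempty
  have hppos : ∀ τ k, (0:ℝ) < p τ k := by
    intro τ k; rw [hp]; exact div_pos (Real.exp_pos _) (hZpos τ)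
  have hpsum : ∀ τ, ∑ k, p τ k = 1 := by
    intro τ
    simp only [hp]
    rw [← Finset.sum_div, div_self (hZpos τ).ne']
  have hlogp : ∀ τ k, Real.log (p τ k) = s k / τ - Real.log (Z τ) := by
    intro τ k
    rw [hp, Real.log_div (Real.exp_pos _).ne' (hZpos τ).ne', Real.log_exp]
  set α : ℝ := τ₁ / τ₂ with hαdef
  have hα0 : 0 < α := div_pos hτ₁ hτ₂
  have hα1 : α < 1 := (div_lt_one hτ₂).mpr hlt
  set c : ℝ := α * Real.log (Z τ₁) - Real.log (Z τ₂) with hcdef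
  have hrel : ∀ k, Real.log (p τ₂ k) = α * Real.log (p τ₁ k) + c := by
    intro k
    rw [hlogp, hlogp, hcdef]
    have h : s k / τ₂ = α * (s k / τ₁) := by
      rw [hαdef]; field_simp
    rw [h]; ring
  -- abbreviations
  set A : ℝ := ∑ k, p τ₁ k * Real.log (p τ₁ k) with hA
  set B : ℝ := ∑ k, p τ₂ k * Real.log (p τ₂ k) with hB
  set D : ℝ := ∑ k, p τ₂ k * Real.log (p τ₁ k) with hD
  have hPQ : ∑ k, p τ₁ k * Real.log (p τ₂ k) = α * A + c := by
    simp only [hrel]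
    rw [hA]
    have : ∑ k, p τ₁ k * (α * Real.log (p τ₁ k) + c)
        = (∑ k, α * (p τ₁ k * Real.log (p τ₁ k))) + ∑ k, p τ₁ k * c := by
      rw [← Finset.sum_add_distrib]
      exact Finset.sum_congr rfl fun k _ => by ring
    rw [this, ← Finset.sum_mul, hpsum τ₁, one_mul, ← Finset.mul_sum]
  have hQQ : B = α * D + c := by
    rw [hB]
    simp only [hrel]
    have : ∑ k, p τ₂ k * (α * Real.log (p τ₁ k) + c)
        = (∑ k, α * (p τ₂ k * Real.log (p τ₁ k))) + ∑ k, p τ₂ k * c := by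
      rw [← Finset.sum_add_distrib]
      exact Finset.sum_congr rfl fun k _ => by ring
    rw [this, ← Finset.sum_mul, hpsum τ₂, one_mul, hD, Finset.mul_sum]
  have g1 : ∑ k, p τ₁ k * Real.log (p τ₂ k) ≤ A :=
    gibbs_aux (p τ₁) (p τ₂) (hppos τ₁) (hppos τ₂) (hpsum τ₁) (hpsum τ₂)
  have g2 : D ≤ B :=
    gibbs_aux (p τ₂) (p τ₁) (hppos τ₂) (hppos τ₁) (hpsum τ₂) (hpsum τ₁)
  rw [hPQ] at g1
  -- (1-α) B ≤ c ≤ (1-α) A, hence B ≤ A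
  have h1 : (1 - α) * B ≤ c := by nlinarith [mul_le_mul_of_nonneg_left g2 hα0.le]
  have h2 : c ≤ (1 - α) * A := by linarith
  have hBA : B ≤ A := le_of_mul_le_mul_left (h1.trans h2) (by linarith)
  linarith
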